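/- arXiv:1904.02374 — 2 statements merged into one kernel-verified Lean document; each statement's English description precedes it below -/
import Mathlib

section
/- Let O be a discrete valuation ring with uniformizer ϖ, Γ a group, S a finite index set, and for each v ∈ S a subgroup Γ_v of Γ. Let M be a free O-module with O-linear Γ-action; for r ≥ 1 write M_r = M/ϖ^r M, and for a, b ≥ 1 view M_a inside M_{a+b} via the injective Γ-equivariant map given by multiplication by ϖ^b. Fix a, b ≥ 1, and for each v ∈ S and each r ∈ {a, b, a+b} let Z_{r,v} be a subgroup of the group of 1-cocycles Z^1(Γ_v, M_r) containing all 1-coboundaries, such that: multiplication by ϖ^b maps Z_{a,v} into Z_{a+b,v}; reduction modulo ϖ^b maps Z_{a+b,v} onto Z_{b,v}; and every element of Z_{a+b,v} whose reduction modulo ϖ^b is the zero cocycle equals ϖ^b·ξ for some ξ ∈ Z_{a,v}. Call a 1-cocycle z ∈ Z^1(Γ, M_r) Selmer if for every v ∈ S the restriction of z to Γ_v lies in Z_{r,v}. Then: (1) for every Selmer cocycle z' ∈ Z^1(Γ, M_a), the reduction of ϖ^b·z' modulo ϖ^b is a 1-coboundary (indeed zero); and (2) if z ∈ Z^1(Γ,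 M_{a+b}) is a Selmer cocycle whose reduction modulo ϖ^b is a 1-coboundary of Γ with values in M_b, then there exist a Selmer cocycle z' ∈ Z^1(Γ, M_a) and a 1-coboundary β ∈ B^1(Γ, M_{a+b}) with ϖ^b·z' = z + β. Equivalently, the induced sequence of Selmer groups H^1_{L_a}(Γ, M_a) → H^1_{L_{a+b}}(Γ, M_{a+b}) → H^1_{L_b}(Γ, M_b) is exact at the middle term. (This is the purely group-cohomological content of the first exact sequence of Lemma 7.1 of the paper, where Γ is the Galois group Γ_{F,S} and the Γ_v are decomposition groups.) -/
/-- A function `z : Γ → M` represents a 1-cocycle of `Γ` with values in `M/ϖ^r M`: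
the cocycle identity holds modulo `ϖ^r M`. -/
def IsCocycleMod {O Γ M : Type*} [CommRing O] [Group Γ] [AddCommGroup M] [Module O M]
    [DistribMulAction Γ M] (ϖ : O) (r : ℕ) (z : Γ → M) : Prop :=
  ∀ g h : Γ, ∃ v : M, z (g * h) - (z g + g • z h) = ϖ ^ r • v

/-- A function `z : Γ → M` represents a 1-coboundary of `Γ` with values in `M/ϖ^r M`. -/
def IsCoboundaryMod {O Γ M : Type*} [CommRing O] [Group Γ] [AddCommGroup M] [Module O M]
    [DistribMulAction Γ M] (ϖ : O) (r : ℕ) (z : Γ → M) : Prop :=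
  ∃ w : M, ∀ g : Γ, ∃ v : M, z g - (g • w - w) = ϖ ^ r • v

/-!
Let `z` be a Selmer cocycle at level `a + b` whose reduction mod `ϖ^b` is a coboundary
`g ↦ g • w₀ - w₀`. Adding the coboundary of `-w₀` makes `z` divisible by `ϖ^b`, say
`z + ∂(-w₀) = ϖ^b • z'`. Multiplication by `ϖ^b` is injective on the free module `M`, so the
cocycle identity of `z` mod `ϖ^(a+b)` divides to that of `z'` mod `ϖ^a`, and on each `Γ_v` the
function `z'` is the `ξ ∈ Z_{a,v}` provided by the kernel condition on `Z_{a+b,v}`.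
-/

section Cocycles

variable {O Γ M : Type*} [CommRing O] [Group Γ] [AddCommGroup M] [Module O M]
  [DistribMulAction Γ M] {ϖ : O}

theorem mul_smul_sub_self (g h : Γ) (w : M) :
    (g * h) • w - w = (g • w - w) + g • (h • w - w) := by
  rw [mul_smul, smul_sub]
  abel

theorem IsCocycleMod.add_coboundary {r : ℕ} {z : Γ → M} (hz : IsCocycleMod ϖ r z) (w : M) :
    IsCocycleMod ϖ r (fun g => z g + (g • w - w)) := by
  intro g h
  obtain ⟨u, hu⟩ := hz g h
  refine ⟨u, ?_⟩
  rw [← hu]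
  simp only [mul_smul_sub_self, smul_add]
  abel

theorem IsCocycleMod.of_pow_smul [SMulCommClass Γ O M] {a b : ℕ} (hϖ : IsSMulRegular M (ϖ ^ b))
    {z : Γ → M} (hz : IsCocycleMod ϖ (a + b) (fun g => ϖ ^ b • z g)) :
    IsCocycleMod ϖ a z := by
  intro g h
  obtain ⟨u, hu⟩ := hz g h
  refine ⟨u, hϖ ?_⟩
  simp only [smul_sub, smul_add, smul_comm g (ϖ ^ b), smul_smul, ← pow_add, add_comm b a] at hu ⊢
  exact hu

theorem IsCoboundaryMod.exists_add_coboundary_eq_pow_smul {b : ℕ} {z : Γ → M}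
    (hz : IsCoboundaryMod ϖ b z) :
    ∃ (z' : Γ → M) (w : M), ∀ g, ϖ ^ b • z' g = z g + (g • w - w) := by
  obtain ⟨w₀, hw₀⟩ := hz
  choose z' hz' using hw₀
  refine ⟨z', -w₀, fun g => ?_⟩
  rw [← hz', smul_neg]
  abel

end Cocycles

theorem mem_of_pow_smul_mem {O X M : Type*} [CommRing O] [AddCommGroup M] [Module O M]
    {ϖ : O} {b : ℕ} (hϖ : IsSMulRegular M (ϖ ^ b)) {Za Zab : Set (X → M)}
    (hker : ∀ f ∈ Zab, (∀ x, ∃ w : M, f x = ϖ ^ b • w) → ∃ ξ ∈ Za, ∀ x, f x = ϖ ^ b • ξ x)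
    {f : X → M} (hf : (fun x => ϖ ^ b • f x) ∈ Zab) : f ∈ Za := by
  obtain ⟨ξ, hξ, hfξ⟩ := hker _ hf fun x => ⟨f x, rfl⟩
  rwa [show f = ξ from funext fun x => hϖ (hfξ x)]

theorem selmer_sequence_exact_general
    (O : Type*) [CommRing O] [IsDomain O]
    (ϖ : O) (hϖ : Irreducible ϖ)
    (Γ : Type*) [Group Γ]
    (S : Type*) (Γv : S → Subgroup Γ)
    (M : Type*) [AddCommGroup M] [Module O M] [Module.Free O M]
    [DistribMulAction Γ M] [SMulCommClass Γ O M]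
    (a b : ℕ)
    (Za Zab : ∀ v : S, Set ((Γv v) → M))
    -- the local conditions are subgroups
    (hZab_add : ∀ v, ∀ f ∈ Zab v, ∀ f' ∈ Zab v, f + f' ∈ Zab v)
    -- the local conditions contain all 1-coboundaries
    (hZab_cob : ∀ v, ∀ w : M, (fun γ : Γv v => (γ : Γ) • w - w) ∈ Zab v)
    -- elements of Z_{a+b,v} reducing to zero mod ϖ^b are ϖ^b times elements of Z_{a,v}
    (hker : ∀ v, ∀ f ∈ Zab v, (∀ γ, ∃ w : M, f γ = ϖ ^ b • w) →
      ∃ ξ ∈ Za v, ∀ γ, f γ = ϖ ^ b • ξ γ) :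
    -- (1) for a Selmer cocycle z' at level a, the reduction of ϖ^b·z' mod ϖ^b is zero
    (∀ z' : Γ → M, IsCocycleMod ϖ a z' →
      (∀ v, (fun γ : Γv v => z' ↑γ) ∈ Za v) →
      ∀ g : Γ, ∃ w : M, ϖ ^ b • z' g = ϖ ^ b • w) ∧
    -- (2) a Selmer cocycle at level a+b whose reduction mod ϖ^b is a coboundary comes,
    -- up to a coboundary, from a Selmer cocycle at level a
    (∀ z : Γ → M, IsCocycleMod ϖ (a + b) z →
      (∀ v, (fun γ : Γv v => z ↑γ) ∈ Zab v) →
      IsCoboundaryMod ϖ b z →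
      ∃ z' : Γ → M, IsCocycleMod ϖ a z' ∧
        (∀ v, (fun γ : Γv v => z' ↑γ) ∈ Za v) ∧
        ∃ w : M, ∀ g : Γ, ∃ u : M,
          ϖ ^ b • z' g - (z g + (g • w - w)) = ϖ ^ (a + b) • u) := by
  have hϖb : IsSMulRegular M (ϖ ^ b) := .of_ne_zero (pow_ne_zero b hϖ.ne_zero)
  refine ⟨fun z' _ _ g => ⟨z' g, rfl⟩, fun z hz hsel hcob => ?_⟩
  obtain ⟨z', w, hz'⟩ := hcob.exists_add_coboundary_eq_pow_smul
  have hlift : (fun g => ϖ ^ b • z' g) = fun g => z g + (g • w - w) := funext hz'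
  refine ⟨z', .of_pow_smul hϖb (hlift ▸ hz.add_coboundary w), fun v => ?_, w, fun g => ⟨0, ?_⟩⟩
  · refine mem_of_pow_smul_mem hϖb (hker v) ?_
    simp only [hz']
    exact hZab_add v _ (hsel v) _ (hZab_cob v w)
  · rw [hz', sub_self, smul_zero]

/-- **Lemma 7.1 (first exact sequence, group-cohomological content).**
Let `O` be a DVR with uniformizer `ϖ`, `Γ` a group, `S` a finite index set of subgroups
`Γ_v ≤ Γ`, and `M` a free `O`-module with `O`-linear `Γ`-action.  Cocycles with values in
`M/ϖ^r M` are represented by functions into `M` satisfying the cocycle identity mod `ϖ^r`, and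
`M/ϖ^a M` sits inside `M/ϖ^(a+b) M` via multiplication by `ϖ^b`.  Given local conditions
`Z_{r,v} ⊆ Z¹(Γ_v, M/ϖ^r M)` (subgroups containing coboundaries) for `r ∈ {a, b, a+b}`,
compatible as stated, the sequence of Selmer groups
`H¹_{L_a} → H¹_{L_{a+b}} → H¹_{L_b}` is exact at the middle term. -/
theorem selmer_sequence_exact
    (O : Type*) [CommRing O] [IsDomain O] [IsDiscreteValuationRing O]
    (ϖ : O) (hϖ : Irreducible ϖ)
    (Γ : Type*) [Group Γ]
    (S : Type*) [Finite S] (Γv : S → Subgroup Γ)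
    (M : Type*) [AddCommGroup M] [Module O M] [Module.Free O M]
    [DistribMulAction Γ M] [SMulCommClass Γ O M]
    (a b : ℕ) (ha : 1 ≤ a) (hb : 1 ≤ b)
    (Za Zb Zab : ∀ v : S, Set ((Γv v) → M))
    -- the local conditions consist of 1-cocycles (modulo the respective power of ϖ)
    (hZa_coc : ∀ v, ∀ f ∈ Za v, ∀ γ δ : Γv v,
      ∃ w : M, f (γ * δ) - (f γ + (γ : Γ) • f δ) = ϖ ^ a • w)
    (hZb_coc : ∀ v, ∀ f ∈ Zb v, ∀ γ δ : Γv v,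
      ∃ w : M, f (γ * δ) - (f γ + (γ : Γ) • f δ) = ϖ ^ b • w)
    (hZab_coc : ∀ v, ∀ f ∈ Zab v, ∀ γ δ : Γv v,
      ∃ w : M, f (γ * δ) - (f γ + (γ : Γ) • f δ) = ϖ ^ (a + b) • w)
    -- the local conditions are subgroups
    (hZa_add : ∀ v, ∀ f ∈ Za v, ∀ f' ∈ Za v, f + f' ∈ Za v)
    (hZa_neg : ∀ v, ∀ f ∈ Za v, -f ∈ Za v)
    (hZb_add : ∀ v, ∀ f ∈ Zb v, ∀ f' ∈ Zb v, f + f' ∈ Zb v)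
    (hZb_neg : ∀ v, ∀ f ∈ Zb v, -f ∈ Zb v)
    (hZab_add : ∀ v, ∀ f ∈ Zab v, ∀ f' ∈ Zab v, f + f' ∈ Zab v)
    (hZab_neg : ∀ v, ∀ f ∈ Zab v, -f ∈ Zab v)
    -- the local conditions are well defined modulo the respective power of ϖ
    (hZa_sat : ∀ v, ∀ f ∈ Za v, ∀ u : (Γv v) → M,
      (∀ γ, ∃ w : M, u γ = ϖ ^ a • w) → f + u ∈ Za v)
    (hZb_sat : ∀ v, ∀ f ∈ Zb v, ∀ u : (Γv v) → M,
      (∀ γ, ∃ w : M, u γ = ϖ ^ b • w) → f + u ∈ Zb v)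
    (hZab_sat : ∀ v, ∀ f ∈ Zab v, ∀ u : (Γv v) → M,
      (∀ γ, ∃ w : M, u γ = ϖ ^ (a + b) • w) → f + u ∈ Zab v)
    -- the local conditions contain all 1-coboundaries
    (hZa_cob : ∀ v, ∀ w : M, (fun γ : Γv v => (γ : Γ) • w - w) ∈ Za v)
    (hZb_cob : ∀ v, ∀ w : M, (fun γ : Γv v => (γ : Γ) • w - w) ∈ Zb v)
    (hZab_cob : ∀ v, ∀ w : M, (fun γ : Γv v => (γ : Γ) • w - w) ∈ Zab v)
    -- multiplication by ϖ^b maps Z_{a,v} into Z_{a+b,v}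
    (hmul : ∀ v, ∀ f ∈ Za v, (fun γ => ϖ ^ b • f γ) ∈ Zab v)
    -- reduction modulo ϖ^b maps Z_{a+b,v} onto Z_{b,v}
    (hred_into : ∀ v, ∀ f ∈ Zab v, f ∈ Zb v)
    (hred_onto : ∀ v, ∀ f ∈ Zb v, ∃ f' ∈ Zab v, ∀ γ, ∃ w : M, f' γ - f γ = ϖ ^ b • w)
    -- elements of Z_{a+b,v} reducing to zero mod ϖ^b are ϖ^b times elements of Z_{a,v}
    (hker : ∀ v, ∀ f ∈ Zab v, (∀ γ, ∃ w : M, f γ = ϖ ^ b • w) →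
      ∃ ξ ∈ Za v, ∀ γ, f γ = ϖ ^ b • ξ γ) :
    -- (1) for a Selmer cocycle z' at level a, the reduction of ϖ^b·z' mod ϖ^b is zero
    (∀ z' : Γ → M, IsCocycleMod ϖ a z' →
      (∀ v, (fun γ : Γv v => z' ↑γ) ∈ Za v) →
      ∀ g : Γ, ∃ w : M, ϖ ^ b • z' g = ϖ ^ b • w) ∧
    -- (2) a Selmer cocycle at level a+b whose reduction mod ϖ^b is a coboundary comes,
    -- up to a coboundary, from a Selmer cocycle at level a
    (∀ z : Γ → M, IsCocycleMod ϖ (a + b) z →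
      (∀ v, (fun γ : Γv v => z ↑γ) ∈ Zab v) →
      IsCoboundaryMod ϖ b z →
      ∃ z' : Γ → M, IsCocycleMod ϖ a z' ∧
        (∀ v, (fun γ : Γv v => z' ↑γ) ∈ Za v) ∧
        ∃ w : M, ∀ g : Γ, ∃ u : M,
          ϖ ^ b • z' g - (z g + (g • w - w)) = ϖ ^ (a + b) • u) :=
  selmer_sequence_exact_general O ϖ hϖ Γ S Γv M a b Za Zab hZab_add hZab_cob hker
end

section
/- Let O be a discrete valuation ring with uniformizer ϖ, Γ a group, S a finite index set with subgroups Γ_v ≤ Γ for v ∈ S, and n ≥ 2 an integer. Let M and M' be two free O-modules with O-linear Γ-action, each equipped, for every 0 < r ≤ n and every v ∈ S, with subgroups of local cocycles Z_{r,v} ⊆ Z^1(Γ_v, M/ϖ^r M) (respectively Z'_{r,v} ⊆ Z^1(Γ_v, M'/ϖ^r M')) containing all 1-coboundaries and satisfying, for all a, b ≥ 1 with a + b ≤ n: multiplication by ϖ^b maps the level-a local condition injectively into the level-(a+b) one, reduction modulo ϖ^b maps the level-(a+b) local condition onto the level-b one, and every element of the level-(a+b) condition reducing to zero is ϖ^b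 times an element of the level-a condition. Define the Selmer group H^1_{L_r}(Γ, M/ϖ^r M) as the image in H^1(Γ, M/ϖ^r M) of those 1-cocycles whose restriction to every Γ_v lies in Z_{r,v}, and similarly for M'. Assume: (i) (M/ϖM)^Γ = 0 and (M'/ϖM')^Γ = 0; and (ii) for every 0 < r ≤ n the Selmer groups H^1_{L_r}(Γ, M/ϖ^r M) and H^1_{L'_r}(Γ, M'/ϖ^r M') are finite of equal cardinality. Then the relative Selmer groups — the image of H^1_{L_n}(Γ, M/ϖ^n M) → H^1_{L_1}(Γ, M/ϖM) under the map induced by reduction modulo ϖ, and the corresponding image for M' — are finite of equal cardinality. (This is the purely group-cohomological content of Lemma 7.3 of the paper, where M' is the Tate dual of M and hypothesis (ii) is the 'balanced' condition of Definition 7.2.) -/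
/-- `z` represents a Selmer 1-cocycle of level `r`: it is a 1-cocycle with values in
`M/ϖ^r M` whose restriction to each local subgroup `Γ_v` lies in the local condition `Z v`. -/
def IsSelmerCocycle {O Γ S M : Type*} [CommRing O] [Group Γ] [AddCommGroup M] [Module O M]
    [DistribMulAction Γ M] (ϖ : O) (Γv : S → Subgroup Γ) (r : ℕ)
    (Z : ∀ v : S, Set ((Γv v) → M)) (z : Γ → M) : Prop :=
  IsCocycleMod ϖ r z ∧ ∀ v : S, (fun γ : Γv v => z ↑γ) ∈ Z v

/-- Two Selmer cocycles are identified when their difference is a 1-coboundary with values in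
`M/ϖ^r M`. -/
def selmerRel {O Γ S M : Type*} [CommRing O] [Group Γ] [AddCommGroup M] [Module O M]
    [DistribMulAction Γ M] (ϖ : O) (Γv : S → Subgroup Γ) (r : ℕ)
    (Z : ∀ v : S, Set ((Γv v) → M))
    (z z' : {z : Γ → M // IsSelmerCocycle ϖ Γv r Z z}) : Prop :=
  IsCoboundaryMod ϖ r (z.1 - z'.1)

/-- The Selmer group `H¹_{L_r}(Γ, M/ϖ^r M)`: Selmer cocycles modulo coboundaries. -/
def SelmerGroup {O Γ S M : Type*} [CommRing O] [Group Γ] [AddCommGroup M] [Module O M]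
    [DistribMulAction Γ M] (ϖ : O) (Γv : S → Subgroup Γ) (r : ℕ)
    (Z : ∀ v : S, Set ((Γv v) → M)) : Type _ :=
  Quot (selmerRel ϖ Γv r Z)

/-- The relative Selmer group: the image of the level-`n` Selmer group in the level-`1`
Selmer group under the map induced by reduction modulo `ϖ` (on representing cocycles,
reduction is the identity). -/
def relSelmerSet {O Γ S M : Type*} [CommRing O] [Group Γ] [AddCommGroup M] [Module O M]
    [DistribMulAction Γ M] (ϖ : O) (Γv : S → Subgroup Γ) (n : ℕ)
    (Z1 Zn : ∀ v : S, Set ((Γv v) → M)) : Set (SelmerGroup ϖ Γv 1 Z1) :=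
  {c | ∃ z : {z : Γ → M // IsSelmerCocycle ϖ Γv 1 Z1 z},
        Quot.mk (selmerRel ϖ Γv 1 Z1) z = c ∧ IsSelmerCocycle ϖ Γv n Zn z.1}

/-! Reduction modulo `ϖ` and multiplication by `ϖ` give an exact sequence
`0 → H¹_{L_{n-1}}(Γ, M/ϖ^{n-1}M) → H¹_{L_n}(Γ, M/ϖ^n M) → H¹_{L_1}(Γ, M/ϖM)`:
injectivity on the left is where `(M/ϖM)^Γ = 0` enters, exactness in the middle is the kernel
condition on the local conditions. So the relative Selmer group, the image of the second map,
has order `|H¹_{L_n}| / |H¹_{L_{n-1}}|`, and the balanced hypothesis makes this ratio the same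
for `M` and `M'`. -/

lemma AddMonoidHom.card_eq_card_range_mul_card_of_ker_eq_range {G H K : Type*} [AddGroup G]
    [AddGroup H] [AddGroup K] (f : G →+ H) (g : K →+ G) (hg : Function.Injective g)
    (hfg : f.ker = g.range) : Nat.card G = Nat.card f.range * Nat.card K := by
  rw [← f.ker.card_mul_index, AddSubgroup.index_ker, hfg, mul_comm,
    Nat.card_congr (AddMonoidHom.ofInjective hg).toEquiv]

section Selmer

variable {O Γ S M : Type*} [CommRing O] [Group Γ] [AddCommGroup M] [Module O M]
  [DistribMulAction Γ M] (ϖ : O)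

lemma exists_eq_pow_smul_of_le {r s : ℕ} (hrs : r ≤ s) {x : M} (h : ∃ v : M, x = ϖ ^ s • v) :
    ∃ v : M, x = ϖ ^ r • v := by
  obtain ⟨v, rfl⟩ := h
  exact ⟨ϖ ^ (s - r) • v, by rw [smul_smul, ← pow_add, Nat.add_sub_cancel' hrs]⟩

def cocyclesMod (r : ℕ) : AddSubgroup (Γ → M) where
  carrier := {z | IsCocycleMod ϖ r z}
  zero_mem' _ _ := ⟨0, by simp⟩
  add_mem' {z z'} hz hz' g h := by
    obtain ⟨v, hv⟩ := hz g h
    obtain ⟨v', hv'⟩ := hz' g h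
    refine ⟨v + v', ?_⟩
    rw [smul_add (ϖ ^ r), ← hv, ← hv']
    simp only [Pi.add_apply, smul_add]
    abel
  neg_mem' {z} hz g h := by
    obtain ⟨v, hv⟩ := hz g h
    refine ⟨-v, ?_⟩
    rw [smul_neg (ϖ ^ r), ← hv]
    simp only [Pi.neg_apply, smul_neg]
    abel

def coboundariesMod (r : ℕ) : AddSubgroup (Γ → M) where
  carrier := {z | IsCoboundaryMod ϖ r z}
  zero_mem' := ⟨0, fun _ => ⟨0, by simp⟩⟩
  add_mem' {z z'} := by
    rintro ⟨w, hw⟩ ⟨w', hw'⟩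
    refine ⟨w + w', fun g => ?_⟩
    obtain ⟨v, hv⟩ := hw g
    obtain ⟨v', hv'⟩ := hw' g
    refine ⟨v + v', ?_⟩
    rw [smul_add (ϖ ^ r), ← hv, ← hv']
    simp only [Pi.add_apply, smul_add]
    abel
  neg_mem' {z} := by
    rintro ⟨w, hw⟩
    refine ⟨-w, fun g => ?_⟩
    obtain ⟨v, hv⟩ := hw g
    refine ⟨-v, ?_⟩
    rw [smul_neg (ϖ ^ r), ← hv]
    simp only [Pi.neg_apply, smul_neg]
    abel

lemma cocyclesMod_anti {r s : ℕ} (hrs : r ≤ s) :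
    cocyclesMod (Γ := Γ) (M := M) ϖ s ≤ cocyclesMod ϖ r :=
  fun _ hz g h => exists_eq_pow_smul_of_le ϖ hrs (hz g h)

lemma coboundariesMod_anti {r s : ℕ} (hrs : r ≤ s) :
    coboundariesMod (Γ := Γ) (M := M) ϖ s ≤ coboundariesMod ϖ r := by
  rintro _ ⟨w, hw⟩
  exact ⟨w, fun g => exists_eq_pow_smul_of_le ϖ hrs (hw g)⟩

lemma coboundary_mem_cocyclesMod (r : ℕ) (w : M) :
    (fun g : Γ => g • w - w) ∈ cocyclesMod ϖ r :=
  fun g h => ⟨0, by simp only [mul_smul, smul_sub, smul_zero]; abel⟩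

variable (Γv : S → Subgroup Γ)

def selmerCocycles (r : ℕ) (Z : ∀ v, AddSubgroup (Γv v → M)) : AddSubgroup (Γ → M) where
  carrier := {z | IsSelmerCocycle ϖ Γv r (fun v => (Z v : Set (Γv v → M))) z}
  zero_mem' := ⟨(cocyclesMod ϖ r).zero_mem, fun v => (Z v).zero_mem⟩
  add_mem' hz hz' :=
    ⟨(cocyclesMod ϖ r).add_mem hz.1 hz'.1, fun v => (Z v).add_mem (hz.2 v) (hz'.2 v)⟩
  neg_mem' hz := ⟨(cocyclesMod ϖ r).neg_mem hz.1, fun v => (Z v).neg_mem (hz.2 v)⟩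

lemma selmerCocycles_anti {r s : ℕ} (hrs : r ≤ s) {Zr Zs : ∀ v, AddSubgroup (Γv v → M)}
    (hZ : ∀ v, Zs v ≤ Zr v) : selmerCocycles ϖ Γv s Zs ≤ selmerCocycles ϖ Γv r Zr :=
  fun _ hz => ⟨cocyclesMod_anti ϖ hrs hz.1, fun v => hZ v (hz.2 v)⟩

abbrev SelmerQuotient (r : ℕ) (Z : ∀ v, AddSubgroup (Γv v → M)) :=
  selmerCocycles ϖ Γv r Z ⧸ (coboundariesMod ϖ r).addSubgroupOf (selmerCocycles ϖ Γv r Z)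

def selmerGroupEquiv (r : ℕ) (Z : ∀ v, AddSubgroup (Γv v → M)) :
    SelmerGroup ϖ Γv r (fun v => (Z v : Set (Γv v → M))) ≃ SelmerQuotient ϖ Γv r Z :=
  Quot.congrRight (α := selmerCocycles ϖ Γv r Z) fun z z' => by
    rw [QuotientAddGroup.leftRel_apply, AddSubgroup.mem_addSubgroupOf, AddSubgroup.coe_add,
      AddSubgroup.coe_neg, neg_add_eq_sub, ← neg_mem_iff, neg_sub]
    rfl

def selmerReduction {r s : ℕ} (hrs : r ≤ s) {Zr Zs : ∀ v, AddSubgroup (Γv v → M)}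
    (hZ : ∀ v, Zs v ≤ Zr v) : SelmerQuotient ϖ Γv s Zs →+ SelmerQuotient ϖ Γv r Zr :=
  QuotientAddGroup.map _ _ (AddSubgroup.inclusion (selmerCocycles_anti ϖ Γv hrs hZ))
    fun _ hz => coboundariesMod_anti ϖ hrs hz

@[simp]
lemma selmerReduction_mk {r s : ℕ} (hrs : r ≤ s) {Zr Zs : ∀ v, AddSubgroup (Γv v → M)}
    (hZ : ∀ v, Zs v ≤ Zr v) (z : selmerCocycles ϖ Γv s Zs) :
    selmerReduction ϖ Γv hrs hZ z = (⟨z.1, selmerCocycles_anti ϖ Γv hrs hZ z.2⟩ :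
      selmerCocycles ϖ Γv r Zr) :=
  rfl

lemma card_relSelmerSet {s : ℕ} (hs : 1 ≤ s) {Z₁ Zs : ∀ v, AddSubgroup (Γv v → M)}
    (hred : ∀ v, Zs v ≤ Z₁ v) :
    Nat.card (relSelmerSet ϖ Γv s (fun v => (Z₁ v : Set (Γv v → M)))
      (fun v => (Zs v : Set (Γv v → M)))) = Nat.card (selmerReduction ϖ Γv hs hred).range := by
  rw [← Nat.card_image_of_injective (selmerGroupEquiv ϖ Γv 1 Z₁).injective]
  congr! 2
  ext c
  constructor
  · rintro ⟨_, ⟨z, rfl, hz⟩, rfl⟩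
    exact ⟨QuotientAddGroup.mk ⟨z.1, hz⟩, rfl⟩
  · rintro ⟨x, rfl⟩
    induction x using QuotientAddGroup.induction_on with | H z => ?_
    exact ⟨_, ⟨⟨z.1, selmerCocycles_anti ϖ Γv hs hred z.2⟩, rfl, z.2⟩, rfl⟩

variable [SMulCommClass Γ O M]

lemma smul_mem_cocyclesMod {r : ℕ} {z : Γ → M} (hz : z ∈ cocyclesMod ϖ r) :
    ϖ • z ∈ cocyclesMod ϖ (r + 1) := by
  intro g h
  obtain ⟨v, hv⟩ := hz g h
  refine ⟨v, ?_⟩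
  rw [pow_succ', mul_smul, ← hv]
  simp only [Pi.smul_apply, smul_comm g ϖ, smul_sub, smul_add]

lemma smul_mem_coboundariesMod {r : ℕ} {z : Γ → M} (hz : z ∈ coboundariesMod ϖ r) :
    ϖ • z ∈ coboundariesMod ϖ (r + 1) := by
  obtain ⟨w, hw⟩ := hz
  refine ⟨ϖ • w, fun g => ?_⟩
  obtain ⟨v, hv⟩ := hw g
  refine ⟨v, ?_⟩
  rw [pow_succ', mul_smul, ← hv]
  simp only [Pi.smul_apply, smul_comm g ϖ, smul_sub]

lemma mem_cocyclesMod_of_smul_mem {r : ℕ} (hϖ : IsSMulRegular M ϖ) {u : Γ → M}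
    (hu : ϖ • u ∈ cocyclesMod ϖ (r + 1)) : u ∈ cocyclesMod ϖ r := by
  intro g h
  obtain ⟨v, hv⟩ := hu g h
  refine ⟨v, hϖ ?_⟩
  simp only [Pi.smul_apply, smul_comm g ϖ] at hv
  dsimp only
  rw [smul_smul, ← pow_succ', ← hv]
  simp only [smul_sub, smul_add]

lemma mem_coboundariesMod_of_smul_mem {r : ℕ} (hϖ : IsSMulRegular M ϖ)
    (hfix : ∀ x : M, (∀ g : Γ, ∃ v : M, g • x - x = ϖ • v) → ∃ v : M, x = ϖ • v)
    {z : Γ → M} (hz : ϖ • z ∈ coboundariesMod ϖ (r + 1)) : z ∈ coboundariesMod ϖ r := by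
  obtain ⟨w, hw⟩ := hz
  choose v hv using hw
  have hcob (g : Γ) : g • w - w = ϖ • (z g - ϖ ^ r • v g) := by
    rw [smul_sub, smul_smul, ← pow_succ', ← hv g, Pi.smul_apply]
    abel
  -- `w` is `Γ`-invariant modulo `ϖ`, hence divisible by `ϖ`.
  obtain ⟨w', rfl⟩ := hfix w fun g => ⟨_, hcob g⟩
  refine ⟨w', fun g => ⟨v g, hϖ ?_⟩⟩
  dsimp only
  rw [smul_smul, ← pow_succ', ← hv g]
  simp only [Pi.smul_apply, smul_sub, smul_comm g ϖ w']

lemma smul_mem_selmerCocycles {r : ℕ} {Zr Zs : ∀ v, AddSubgroup (Γv v → M)}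
    (hZ : ∀ v, ∀ f ∈ Zr v, ϖ • f ∈ Zs v) {z : Γ → M} (hz : z ∈ selmerCocycles ϖ Γv r Zr) :
    ϖ • z ∈ selmerCocycles ϖ Γv (r + 1) Zs :=
  ⟨smul_mem_cocyclesMod ϖ hz.1, fun v => hZ v _ (hz.2 v)⟩

def selmerSMul {r : ℕ} {Zr Zs : ∀ v, AddSubgroup (Γv v → M)}
    (hZ : ∀ v, ∀ f ∈ Zr v, ϖ • f ∈ Zs v) :
    SelmerQuotient ϖ Γv r Zr →+ SelmerQuotient ϖ Γv (r + 1) Zs :=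
  QuotientAddGroup.map _ _
    (((DistribSMul.toAddMonoidHom (Γ → M) ϖ).comp (selmerCocycles ϖ Γv r Zr).subtype).codRestrict
      _ fun z => smul_mem_selmerCocycles ϖ Γv hZ z.2)
    fun _ hz => smul_mem_coboundariesMod ϖ hz

@[simp]
lemma selmerSMul_mk {r : ℕ} {Zr Zs : ∀ v, AddSubgroup (Γv v → M)}
    (hZ : ∀ v, ∀ f ∈ Zr v, ϖ • f ∈ Zs v) (z : selmerCocycles ϖ Γv r Zr) :
    selmerSMul ϖ Γv (r := r) hZ z = (⟨ϖ • z.1, smul_mem_selmerCocycles ϖ Γv hZ z.2⟩ :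
      selmerCocycles ϖ Γv (r + 1) Zs) :=
  rfl

variable {m : ℕ} {Z₁ Zm Zs : ∀ v, AddSubgroup (Γv v → M)}

lemma range_selmerSMul_le_ker_selmerReduction (hred : ∀ v, Zs v ≤ Z₁ v)
    (hmul : ∀ v, ∀ f ∈ Zm v, ϖ • f ∈ Zs v) :
    (selmerSMul ϖ Γv hmul).range ≤ (selmerReduction ϖ Γv (Nat.le_add_left 1 m) hred).ker := by
  rintro _ ⟨x, rfl⟩
  induction x using QuotientAddGroup.induction_on with | H z => ?_
  rw [AddMonoidHom.mem_ker, selmerSMul_mk, selmerReduction_mk, QuotientAddGroup.eq_zero_iff]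
  exact ⟨0, fun g => ⟨z.1 g, by simp⟩⟩

lemma ker_selmerReduction_le_range_selmerSMul (hred : ∀ v, Zs v ≤ Z₁ v)
    (hmul : ∀ v, ∀ f ∈ Zm v, ϖ • f ∈ Zs v) (hϖ : IsSMulRegular M ϖ)
    (hcob : ∀ v w, (fun γ : Γv v => (γ : Γ) • w - w) ∈ Zs v)
    (hker : ∀ v f, ϖ • f ∈ Zs v → f ∈ Zm v) :
    (selmerReduction ϖ Γv (Nat.le_add_left 1 m) hred).ker ≤ (selmerSMul ϖ Γv hmul).range := by
  intro x hx
  induction x using QuotientAddGroup.induction_on with | H z => ?_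
  rw [AddMonoidHom.mem_ker, selmerReduction_mk, QuotientAddGroup.eq_zero_iff] at hx
  obtain ⟨w, hw⟩ := hx
  choose u hu using hw
  simp only [AddSubgroup.subtype_apply, pow_one] at hu
  -- `z` is `ϖ • u` plus a coboundary; `u` is the preimage.
  have hz : ϖ • u = z.1 - fun g => g • w - w := funext fun g => (hu g).symm
  have hu_coc : u ∈ cocyclesMod ϖ m := by
    refine mem_cocyclesMod_of_smul_mem ϖ hϖ ?_
    rw [hz]
    exact sub_mem z.2.1 (coboundary_mem_cocyclesMod ϖ _ w)
  have hu_loc (v : S) : (fun γ : Γv v => u γ) ∈ Zm v := by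
    refine hker v _ ?_
    convert sub_mem (z.2.2 v) (hcob v w) using 1
    exact funext fun γ => congrFun hz γ
  refine ⟨QuotientAddGroup.mk ⟨u, hu_coc, hu_loc⟩, ?_⟩
  rw [selmerSMul_mk, QuotientAddGroup.eq]
  exact ⟨w, fun g => ⟨0, by simp [hz]⟩⟩

lemma selmerSMul_injective (hmul : ∀ v, ∀ f ∈ Zm v, ϖ • f ∈ Zs v) (hϖ : IsSMulRegular M ϖ)
    (hfix : ∀ x : M, (∀ g : Γ, ∃ v : M, g • x - x = ϖ • v) → ∃ v : M, x = ϖ • v) :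
    Function.Injective (selmerSMul ϖ Γv (r := m) hmul) := by
  rw [injective_iff_map_eq_zero]
  intro x hx
  induction x using QuotientAddGroup.induction_on with | H z => ?_
  rw [selmerSMul_mk, QuotientAddGroup.eq_zero_iff] at hx
  rw [QuotientAddGroup.eq_zero_iff]
  exact mem_coboundariesMod_of_smul_mem ϖ hϖ hfix hx

theorem card_relSelmerSet_mul_card_selmerGroup (hred : ∀ v, Zs v ≤ Z₁ v)
    (hmul : ∀ v, ∀ f ∈ Zm v, ϖ • f ∈ Zs v) (hϖ : IsSMulRegular M ϖ)
    (hcob : ∀ v w, (fun γ : Γv v => (γ : Γ) • w - w) ∈ Zs v)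
    (hker : ∀ v f, ϖ • f ∈ Zs v → f ∈ Zm v)
    (hfix : ∀ x : M, (∀ g : Γ, ∃ v : M, g • x - x = ϖ • v) → ∃ v : M, x = ϖ • v) :
    Nat.card (relSelmerSet ϖ Γv (m + 1) (fun v => (Z₁ v : Set (Γv v → M)))
        (fun v => (Zs v : Set (Γv v → M)))) *
      Nat.card (SelmerGroup ϖ Γv m (fun v => (Zm v : Set (Γv v → M)))) =
    Nat.card (SelmerGroup ϖ Γv (m + 1) (fun v => (Zs v : Set (Γv v → M)))) := by
  rw [card_relSelmerSet ϖ Γv (Nat.le_add_left 1 m) hred,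
    Nat.card_congr (selmerGroupEquiv ϖ Γv m Zm), Nat.card_congr (selmerGroupEquiv ϖ Γv _ Zs),
    AddMonoidHom.card_eq_card_range_mul_card_of_ker_eq_range _ _
      (selmerSMul_injective ϖ Γv hmul hϖ hfix)
      ((ker_selmerReduction_le_range_selmerSMul ϖ Γv hred hmul hϖ hcob hker).antisymm
        (range_selmerSMul_le_ker_selmerReduction ϖ Γv hred hmul))]

end Selmer

theorem card_relSelmerSet_eq_div {O Γ S M : Type*} [CommRing O] [IsDomain O] [Group Γ]
    [AddCommGroup M] [Module O M] [Module.Free O M] [DistribMulAction Γ M] [SMulCommClass Γ O M]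
    {ϖ : O} (hϖ : ϖ ≠ 0) (Γv : S → Subgroup Γ) {m : ℕ} (hm : 1 ≤ m)
    (Z : ℕ → ∀ v : S, Set ((Γv v) → M))
    (hZadd : ∀ r, 0 < r → r ≤ m + 1 → ∀ v, ∀ f ∈ Z r v, ∀ f' ∈ Z r v, f + f' ∈ Z r v)
    (hZneg : ∀ r, 0 < r → r ≤ m + 1 → ∀ v, ∀ f ∈ Z r v, -f ∈ Z r v)
    (hZcob : ∀ r, 0 < r → r ≤ m + 1 → ∀ v, ∀ w : M,
      (fun γ : Γv v => (γ : Γ) • w - w) ∈ Z r v)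
    (hZmul : ∀ a b, 1 ≤ a → 1 ≤ b → a + b ≤ m + 1 → ∀ v, ∀ f ∈ Z a v,
      (fun γ => ϖ ^ b • f γ) ∈ Z (a + b) v)
    (hZred_into : ∀ a b, 1 ≤ a → 1 ≤ b → a + b ≤ m + 1 → ∀ v, ∀ f ∈ Z (a + b) v, f ∈ Z b v)
    (hZker : ∀ a b, 1 ≤ a → 1 ≤ b → a + b ≤ m + 1 → ∀ v, ∀ f ∈ Z (a + b) v,
      (∀ γ, ∃ w : M, f γ = ϖ ^ b • w) → ∃ ξ ∈ Z a v, ∀ γ, f γ = ϖ ^ b • ξ γ)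
    (hfix : ∀ x : M, (∀ g : Γ, ∃ v : M, g • x - x = ϖ • v) → ∃ v : M, x = ϖ • v)
    [Finite (SelmerGroup ϖ Γv m (Z m))] :
    Nat.card (relSelmerSet ϖ Γv (m + 1) (Z 1) (Z (m + 1))) =
      Nat.card (SelmerGroup ϖ Γv (m + 1) (Z (m + 1))) / Nat.card (SelmerGroup ϖ Γv m (Z m)) := by
  have hϖ' : IsSMulRegular M ϖ := .of_ne_zero hϖ
  let L (r : ℕ) (hr₀ : 0 < r) (hr : r ≤ m + 1) (v : S) : AddSubgroup (Γv v → M) :=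
    { carrier := Z r v
      add_mem' := fun hf hf' => hZadd r hr₀ hr v _ hf _ hf'
      zero_mem' := by simpa [Pi.zero_def] using hZcob r hr₀ hr v 0
      neg_mem' := hZneg r hr₀ hr v _ }
  have hker (v : S) (f : Γv v → M) (hf : ϖ • f ∈ L (m + 1) (by omega) le_rfl v) :
      f ∈ L m (by omega) (by omega) v := by
    obtain ⟨ξ, hξ, hfξ⟩ := hZker m 1 hm le_rfl le_rfl v _ hf fun γ => ⟨f γ, by simp⟩
    show f ∈ Z m v
    convert hξ
    exact funext fun γ => hϖ' (by simpa using hfξ γ)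
  have key := card_relSelmerSet_mul_card_selmerGroup ϖ Γv (m := m) (Z₁ := L 1 one_pos (by omega))
    (fun v f hf => hZred_into m 1 hm le_rfl le_rfl v f hf)
    (fun v f hf => show (fun γ => ϖ • f γ) ∈ Z (m + 1) v by
      simpa using hZmul m 1 hm le_rfl le_rfl v f hf) hϖ'
    (hZcob (m + 1) (by omega) le_rfl) hker hfix
  have := (selmerGroupEquiv ϖ Γv m (L m (by omega) (by omega))).nonempty
  exact Nat.eq_div_of_mul_eq_left Nat.card_pos.ne' key

theorem relative_selmer_balanced_general
    (O : Type*) [CommRing O] [IsDomain O]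
    (ϖ : O) (hϖ : Irreducible ϖ)
    (Γ : Type*) [Group Γ]
    (S : Type*) (Γv : S → Subgroup Γ)
    (n : ℕ) (hn : 2 ≤ n)
    (M : Type*) [AddCommGroup M] [Module O M] [Module.Free O M]
    [DistribMulAction Γ M] [SMulCommClass Γ O M]
    (M' : Type*) [AddCommGroup M'] [Module O M'] [Module.Free O M']
    [DistribMulAction Γ M'] [SMulCommClass Γ O M']
    (Z : ℕ → ∀ v : S, Set ((Γv v) → M))
    (Z' : ℕ → ∀ v : S, Set ((Γv v) → M'))
    -- the local conditions are subgroups, well defined modulo the respective power of ϖ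
    (hZadd : ∀ r, 0 < r → r ≤ n → ∀ v, ∀ f ∈ Z r v, ∀ f' ∈ Z r v, f + f' ∈ Z r v)
    (hZneg : ∀ r, 0 < r → r ≤ n → ∀ v, ∀ f ∈ Z r v, -f ∈ Z r v)
    (hZ'add : ∀ r, 0 < r → r ≤ n → ∀ v, ∀ f ∈ Z' r v, ∀ f' ∈ Z' r v, f + f' ∈ Z' r v)
    (hZ'neg : ∀ r, 0 < r → r ≤ n → ∀ v, ∀ f ∈ Z' r v, -f ∈ Z' r v)
    -- the local conditions contain all 1-coboundaries
    (hZcob : ∀ r, 0 < r → r ≤ n → ∀ v, ∀ w : M,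
      (fun γ : Γv v => (γ : Γ) • w - w) ∈ Z r v)
    (hZ'cob : ∀ r, 0 < r → r ≤ n → ∀ v, ∀ w : M',
      (fun γ : Γv v => (γ : Γ) • w - w) ∈ Z' r v)
    -- compatibilities between levels: multiplication by ϖ^b, reduction, and kernels
    (hZmul : ∀ a b, 1 ≤ a → 1 ≤ b → a + b ≤ n → ∀ v, ∀ f ∈ Z a v,
      (fun γ => ϖ ^ b • f γ) ∈ Z (a + b) v)
    (hZred_into : ∀ a b, 1 ≤ a → 1 ≤ b → a + b ≤ n → ∀ v, ∀ f ∈ Z (a + b) v, f ∈ Z b v)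
    (hZker : ∀ a b, 1 ≤ a → 1 ≤ b → a + b ≤ n → ∀ v, ∀ f ∈ Z (a + b) v,
      (∀ γ, ∃ w : M, f γ = ϖ ^ b • w) → ∃ ξ ∈ Z a v, ∀ γ, f γ = ϖ ^ b • ξ γ)
    (hZ'mul : ∀ a b, 1 ≤ a → 1 ≤ b → a + b ≤ n → ∀ v, ∀ f ∈ Z' a v,
      (fun γ => ϖ ^ b • f γ) ∈ Z' (a + b) v)
    (hZ'red_into : ∀ a b, 1 ≤ a → 1 ≤ b → a + b ≤ n → ∀ v, ∀ f ∈ Z' (a + b) v, f ∈ Z' b v)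
    (hZ'ker : ∀ a b, 1 ≤ a → 1 ≤ b → a + b ≤ n → ∀ v, ∀ f ∈ Z' (a + b) v,
      (∀ γ, ∃ w : M', f γ = ϖ ^ b • w) → ∃ ξ ∈ Z' a v, ∀ γ, f γ = ϖ ^ b • ξ γ)
    -- (i) the mod-ϖ invariants of M and M' vanish
    (hfix : ∀ x : M, (∀ g : Γ, ∃ v : M, g • x - x = ϖ • v) → ∃ v : M, x = ϖ • v)
    (hfix' : ∀ x : M', (∀ g : Γ, ∃ v : M', g • x - x = ϖ • v) → ∃ v : M', x = ϖ • v)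
    -- (ii) the Selmer groups at each level 0 < r ≤ n are finite of equal cardinality
    (hbal : ∀ r, 0 < r → r ≤ n →
      Finite (SelmerGroup ϖ Γv r (Z r)) ∧ Finite (SelmerGroup ϖ Γv r (Z' r)) ∧
      Nat.card (SelmerGroup ϖ Γv r (Z r)) = Nat.card (SelmerGroup ϖ Γv r (Z' r))) :
    (relSelmerSet ϖ Γv n (Z 1) (Z n)).Finite ∧
    (relSelmerSet ϖ Γv n (Z' 1) (Z' n)).Finite ∧
    Nat.card (relSelmerSet ϖ Γv n (Z 1) (Z n)) =
      Nat.card (relSelmerSet ϖ Γv n (Z' 1) (Z' n)) := by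
  obtain ⟨m, rfl⟩ : ∃ m, n = m + 1 := ⟨n - 1, by omega⟩
  obtain ⟨_, _, -⟩ := hbal 1 one_pos (by omega)
  obtain ⟨_, _, hcard⟩ := hbal m (by omega) (by omega)
  refine ⟨Set.toFinite _, Set.toFinite _, ?_⟩
  rw [card_relSelmerSet_eq_div hϖ.ne_zero Γv (by omega) Z hZadd hZneg hZcob hZmul hZred_into
      hZker hfix,
    card_relSelmerSet_eq_div hϖ.ne_zero Γv (by omega) Z' hZ'add hZ'neg hZ'cob hZ'mul hZ'red_into
      hZ'ker hfix',
    hcard, (hbal (m + 1) (by omega) le_rfl).2.2]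

/-- **Lemma 7.3 (group-cohomological content).**  With balanced local conditions at every
level `0 < r ≤ n` for two free `O`-modules `M`, `M'` with `O`-linear `Γ`-action whose mod-`ϖ`
invariants vanish, the relative Selmer groups of `M` and `M'` are finite of equal
cardinality. -/
theorem relative_selmer_balanced
    (O : Type*) [CommRing O] [IsDomain O] [IsDiscreteValuationRing O]
    (ϖ : O) (hϖ : Irreducible ϖ)
    (Γ : Type*) [Group Γ]
    (S : Type*) [Finite S] (Γv : S → Subgroup Γ)
    (n : ℕ) (hn : 2 ≤ n)
    (M : Type*) [AddCommGroup M] [Module O M] [Module.Free O M]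
    [DistribMulAction Γ M] [SMulCommClass Γ O M]
    (M' : Type*) [AddCommGroup M'] [Module O M'] [Module.Free O M']
    [DistribMulAction Γ M'] [SMulCommClass Γ O M']
    (Z : ℕ → ∀ v : S, Set ((Γv v) → M))
    (Z' : ℕ → ∀ v : S, Set ((Γv v) → M'))
    -- the local conditions consist of 1-cocycles
    (hZcoc : ∀ r, 0 < r → r ≤ n → ∀ v, ∀ f ∈ Z r v, ∀ γ δ : Γv v,
      ∃ w : M, f (γ * δ) - (f γ + (γ : Γ) • f δ) = ϖ ^ r • w)
    (hZ'coc : ∀ r, 0 < r → r ≤ n → ∀ v, ∀ f ∈ Z' r v, ∀ γ δ : Γv v,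
      ∃ w : M', f (γ * δ) - (f γ + (γ : Γ) • f δ) = ϖ ^ r • w)
    -- the local conditions are subgroups, well defined modulo the respective power of ϖ
    (hZadd : ∀ r, 0 < r → r ≤ n → ∀ v, ∀ f ∈ Z r v, ∀ f' ∈ Z r v, f + f' ∈ Z r v)
    (hZneg : ∀ r, 0 < r → r ≤ n → ∀ v, ∀ f ∈ Z r v, -f ∈ Z r v)
    (hZsat : ∀ r, 0 < r → r ≤ n → ∀ v, ∀ f ∈ Z r v, ∀ u : (Γv v) → M,
      (∀ γ, ∃ w : M, u γ = ϖ ^ r • w) → f + u ∈ Z r v)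
    (hZ'add : ∀ r, 0 < r → r ≤ n → ∀ v, ∀ f ∈ Z' r v, ∀ f' ∈ Z' r v, f + f' ∈ Z' r v)
    (hZ'neg : ∀ r, 0 < r → r ≤ n → ∀ v, ∀ f ∈ Z' r v, -f ∈ Z' r v)
    (hZ'sat : ∀ r, 0 < r → r ≤ n → ∀ v, ∀ f ∈ Z' r v, ∀ u : (Γv v) → M',
      (∀ γ, ∃ w : M', u γ = ϖ ^ r • w) → f + u ∈ Z' r v)
    -- the local conditions contain all 1-coboundaries
    (hZcob : ∀ r, 0 < r → r ≤ n → ∀ v, ∀ w : M,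
      (fun γ : Γv v => (γ : Γ) • w - w) ∈ Z r v)
    (hZ'cob : ∀ r, 0 < r → r ≤ n → ∀ v, ∀ w : M',
      (fun γ : Γv v => (γ : Γ) • w - w) ∈ Z' r v)
    -- compatibilities between levels: multiplication by ϖ^b, reduction, and kernels
    (hZmul : ∀ a b, 1 ≤ a → 1 ≤ b → a + b ≤ n → ∀ v, ∀ f ∈ Z a v,
      (fun γ => ϖ ^ b • f γ) ∈ Z (a + b) v)
    (hZred_into : ∀ a b, 1 ≤ a → 1 ≤ b → a + b ≤ n → ∀ v, ∀ f ∈ Z (a + b) v, f ∈ Z b v)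
    (hZred_onto : ∀ a b, 1 ≤ a → 1 ≤ b → a + b ≤ n → ∀ v, ∀ f ∈ Z b v,
      ∃ f' ∈ Z (a + b) v, ∀ γ, ∃ w : M, f' γ - f γ = ϖ ^ b • w)
    (hZker : ∀ a b, 1 ≤ a → 1 ≤ b → a + b ≤ n → ∀ v, ∀ f ∈ Z (a + b) v,
      (∀ γ, ∃ w : M, f γ = ϖ ^ b • w) → ∃ ξ ∈ Z a v, ∀ γ, f γ = ϖ ^ b • ξ γ)
    (hZ'mul : ∀ a b, 1 ≤ a → 1 ≤ b → a + b ≤ n → ∀ v, ∀ f ∈ Z' a v,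
      (fun γ => ϖ ^ b • f γ) ∈ Z' (a + b) v)
    (hZ'red_into : ∀ a b, 1 ≤ a → 1 ≤ b → a + b ≤ n → ∀ v, ∀ f ∈ Z' (a + b) v, f ∈ Z' b v)
    (hZ'red_onto : ∀ a b, 1 ≤ a → 1 ≤ b → a + b ≤ n → ∀ v, ∀ f ∈ Z' b v,
      ∃ f' ∈ Z' (a + b) v, ∀ γ, ∃ w : M', f' γ - f γ = ϖ ^ b • w)
    (hZ'ker : ∀ a b, 1 ≤ a → 1 ≤ b → a + b ≤ n → ∀ v, ∀ f ∈ Z' (a + b) v,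
      (∀ γ, ∃ w : M', f γ = ϖ ^ b • w) → ∃ ξ ∈ Z' a v, ∀ γ, f γ = ϖ ^ b • ξ γ)
    -- (i) the mod-ϖ invariants of M and M' vanish
    (hfix : ∀ x : M, (∀ g : Γ, ∃ v : M, g • x - x = ϖ • v) → ∃ v : M, x = ϖ • v)
    (hfix' : ∀ x : M', (∀ g : Γ, ∃ v : M', g • x - x = ϖ • v) → ∃ v : M', x = ϖ • v)
    -- (ii) the Selmer groups at each level 0 < r ≤ n are finite of equal cardinality
    (hbal : ∀ r, 0 < r → r ≤ n →
      Finite (SelmerGroup ϖ Γv r (Z r)) ∧ Finite (SelmerGroup ϖ Γv r (Z' r)) ∧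
      Nat.card (SelmerGroup ϖ Γv r (Z r)) = Nat.card (SelmerGroup ϖ Γv r (Z' r))) :
    (relSelmerSet ϖ Γv n (Z 1) (Z n)).Finite ∧
    (relSelmerSet ϖ Γv n (Z' 1) (Z' n)).Finite ∧
    Nat.card (relSelmerSet ϖ Γv n (Z 1) (Z n)) =
      Nat.card (relSelmerSet ϖ Γv n (Z' 1) (Z' n)) :=
  relative_selmer_balanced_general O ϖ hϖ Γ S Γv n hn M M' Z Z' hZadd hZneg hZ'add hZ'neg hZcob
    hZ'cob hZmul hZred_into hZker hZ'mul hZ'red_into hZ'ker hfix hfix' hbal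
end
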